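/- arXiv:math/9201210 — 2 statements merged into one kernel-verified Lean document; each statement's English description precedes it below -/
import Mathlib

section
/- Let E and F be Banach spaces and T : E → F a bounded linear operator. Suppose there exists a regular, countably additive vector measure m of bounded variation, defined on the σ-field of Borel subsets of B(E*) and taking values in F**, such that for every e ∈ E and every y* ∈ F*, y*(Te) = ∫_{B(E*)} e*(e) d m_{y*}(e*), where m_{y*} is the scalar Borel measure on B(E*) given by m_{y*}(V) = m(V)(y*). Then T is a (Grothendieck) integral operator and ‖T‖_int ≤ |m|(B(E*)). -/
open MeasureTheory Set

noncomputable section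

namespace Paper

/-- The closed unit ball of the dual of `E`, equipped (as a subtype of `WeakDual ℝ E`)
with the weak-star topology. -/
abbrev DualBall (E : Type*) [NormedAddCommGroup E] [NormedSpace ℝ E] :=
  {φ : WeakDual ℝ E // ‖WeakDual.toStrongDual φ‖ ≤ 1}

variable {Ω Z : Type*} [TopologicalSpace Ω]

/-- Borel subsets of a topological space. -/
def Borel' (Ω : Type*) [TopologicalSpace Ω] (A : Set Ω) : Prop :=
  MeasurableSet[borel Ω] A

/-- A finite partition of `A` into (pairwise disjoint) Borel pieces. -/
def IsBorelPartition (P : Finset (Set Ω)) (A : Set Ω) : Prop :=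
  (∀ B ∈ P, Borel' Ω B) ∧ (P : Set (Set Ω)).PairwiseDisjoint id ∧
    ⋃₀ (P : Set (Set Ω)) = A

/-- The variation of a set function `m` on the set `A`, computed with respect to a
"norm" gauge `ν` on the values: the supremum over all finite Borel partitions of `A`
of the sums of the gauges of the values of the pieces. -/
def variationWith (ν : Z → ENNReal) (m : Set Ω → Z) (A : Set Ω) : ENNReal :=
  ⨆ P : {P : Finset (Set Ω) // IsBorelPartition P A}, ∑ B ∈ P.1, ν (m B)

/-- The variation of a Banach-space valued set function. -/
def variation [NormedAddCommGroup Z] (m : Set Ω → Z) (A : Set Ω) : ENNReal :=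
  variationWith (fun z => (‖z‖₊ : ENNReal)) m A

/-- `m` is a countably additive vector measure on the Borel σ-field of `Ω`
(it vanishes off the Borel sets and is σ-additive on them). -/
def CountablyAdditive [NormedAddCommGroup Z] (m : Set Ω → Z) : Prop :=
  (∀ A : Set Ω, ¬ Borel' Ω A → m A = 0) ∧
  ∀ s : ℕ → Set Ω, (∀ n, Borel' Ω (s n)) → Pairwise (Function.onFun Disjoint s) →
    HasSum (fun n => m (s n)) (m (⋃ n, s n))

/-- Regularity of a vector measure: every Borel set can be approximated from inside by
compacts and from outside by and open sets, in variation. -/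
def RegularVM [NormedAddCommGroup Z] (m : Set Ω → Z) : Prop :=
  ∀ A : Set Ω, Borel' Ω A → ∀ ε : ENNReal, 0 < ε →
    ∃ K U : Set Ω, IsCompact K ∧ K ⊆ A ∧ IsOpen U ∧ A ⊆ U ∧ variation m (U \ K) < ε

/-- `IntegralEq μ φ r` says that the (real) countably additive Borel set function `μ`
has Jordan decomposition `μ = μp - μn` into finite positive Borel measures and that
`∫ φ dμ = ∫ φ dμp - ∫ φ dμn = r`. -/
def IntegralEq (μ : Set Ω → ℝ) (φ : Ω → ℝ) (r : ℝ) : Prop :=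
  ∃ μp μn : @Measure Ω (borel Ω), IsFiniteMeasure μp ∧ IsFiniteMeasure μn ∧
    (∀ A : Set Ω, Borel' Ω A → μ A = (μp A).toReal - (μn A).toReal) ∧
    r = (∫ x, φ x ∂μp) - ∫ x, φ x ∂μn

section Operators

variable {E F : Type*} [NormedAddCommGroup E] [NormedSpace ℝ E]
  [NormedAddCommGroup F] [NormedSpace ℝ F]

/-- The injective tensor norm of `∑ eᵢ ⊗ gᵢ` (given as a list of pairs):
`sup {|∑ φ(eᵢ) ψ(gᵢ)| : ‖φ‖ ≤ 1, ‖ψ‖ ≤ 1}`. -/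
def epsNorm {E G : Type*} [NormedAddCommGroup E] [NormedSpace ℝ E]
    [NormedAddCommGroup G] [NormedSpace ℝ G] (p : List (E × G)) : ℝ :=
  sSup {r | ∃ (φ : E →L[ℝ] ℝ) (ψ : G →L[ℝ] ℝ), ‖φ‖ ≤ 1 ∧ ‖ψ‖ ≤ 1 ∧
    r = |(p.map fun q => φ q.1 * ψ q.2).sum|}

/-- `C` is a bound witnessing that the bilinear form `(e, y*) ↦ y*(T e)` is bounded for
the injective tensor norm on `E ⊗ F*`, i.e. an integral bound for `T`. -/
def IntegralBound (T : E →L[ℝ] F) (C : ℝ) : Prop :=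
  0 ≤ C ∧ ∀ p : List (E × (F →L[ℝ] ℝ)),
    |(p.map fun q => q.2 (T q.1)).sum| ≤ C * epsNorm p

/-- A (Grothendieck) integral operator: the bilinear form `(e, y*) ↦ y*(T e)` induces a
bounded linear functional on the injective tensor product `E ⊗̂_ε F*`. -/
def IsIntegralOp (T : E →L[ℝ] F) : Prop := ∃ C, IntegralBound T C

/-- The integral norm `‖T‖_int` of an operator. -/
def intNorm (T : E →L[ℝ] F) : ℝ := sInf {C | IntegralBound T C}

/-- A nuclear representation of `T`: `T = ∑ aₙ(·) zₙ` with `∑ ‖aₙ‖ ‖zₙ‖ < ∞`. -/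
def NuclearRep (T : E →L[ℝ] F) (a : ℕ → (E →L[ℝ] ℝ)) (z : ℕ → F) : Prop :=
  Summable (fun n => ‖a n‖ * ‖z n‖) ∧ ∀ x : E, HasSum (fun n => a n x • z n) (T x)

/-- A nuclear operator. -/
def IsNuclearOp (T : E →L[ℝ] F) : Prop := ∃ a z, NuclearRep T a z

/-- The nuclear norm `‖T‖_nuc` of an operator. -/
def nucNorm (T : E →L[ℝ] F) : ℝ :=
  sInf {r | ∃ a z, NuclearRep T a z ∧ r = ∑' n, ‖a n‖ * ‖z n‖}

end Operators

section Representing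

variable {X : Type*} [TopologicalSpace X] [CompactSpace X] [T2Space X]
variable {E F : Type*} [NormedAddCommGroup E] [NormedSpace ℝ E]
  [NormedAddCommGroup F] [NormedSpace ℝ F]

/-- The elementary tensor `u ⊗ e ∈ C(X, E)` for `u ∈ C(X)` and `e ∈ E`. -/
def tens (u : C(X, ℝ)) (e : E) : C(X, E) :=
  ⟨fun x => u x • e, u.continuous.smul continuous_const⟩

/-- `G` is the representing measure of the bounded operator `T : C(X, E) → F`:
`G` is an `L(E, F**)`-valued set function on the Borel σ-field of `X` such that for every
`e ∈ E` and `y* ∈ F*` the scalar set function `B ↦ ⟨G(B)e, y*⟩` is a regular countably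
additive Borel measure of bounded variation which represents the functional
`u ↦ y*(T(u ⊗ e))` on `C(X)`.  (This characterizes `G(B)e = T**(1_B ⊗ e)`.) -/
def Represents (T : C(X, E) →L[ℝ] F)
    (G : Set X → (E →L[ℝ] ((F →L[ℝ] ℝ) →L[ℝ] ℝ))) : Prop :=
  (∀ A : Set X, ¬ Borel' X A → G A = 0) ∧
  ∀ (e : E) (y : F →L[ℝ] ℝ),
    CountablyAdditive (fun B => G B e y) ∧
    RegularVM (fun B => G B e y) ∧
    variation (fun B => G B e y) Set.univ < ⊤ ∧
    ∀ u : C(X, ℝ), IntegralEq (fun B => G B e y) (fun x => u x) (y (T (tens u e)))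

end Representing

section Aux

theorem list_sum_eq_fin {α M : Type*} [AddCommMonoid M] (l : List α) (g : α → M) :
    (l.map g).sum = ∑ i : Fin l.length, g (l.get i) := by
  induction l with
  | nil => simp
  | cons a l ih =>
    rw [List.map_cons, List.sum_cons, ih]
    exact (Fin.sum_univ_succ fun i : Fin (l.length + 1) => g ((a :: l).get i)).symm

variable {E F : Type*} [NormedAddCommGroup E] [NormedSpace ℝ E]
  [NormedAddCommGroup F] [NormedSpace ℝ F]

theorem epsNorm_set_nonempty (p : List (E × F)) :
    {r | ∃ (φ : E →L[ℝ] ℝ) (ψ : F →L[ℝ] ℝ), ‖φ‖ ≤ 1 ∧ ‖ψ‖ ≤ 1 ∧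
      r = |(p.map fun q => φ q.1 * ψ q.2).sum|}.Nonempty := by
  refine ⟨|(p.map fun q => (0 : E →L[ℝ] ℝ) q.1 * (0 : F →L[ℝ] ℝ) q.2).sum|,
    0, 0, by simp, by simp, rfl⟩

theorem epsNorm_set_bddAbove (p : List (E × F)) :
    BddAbove {r | ∃ (φ : E →L[ℝ] ℝ) (ψ : F →L[ℝ] ℝ), ‖φ‖ ≤ 1 ∧ ‖ψ‖ ≤ 1 ∧
      r = |(p.map fun q => φ q.1 * ψ q.2).sum|} := by
  refine ⟨(p.map fun q => ‖q.1‖ * ‖q.2‖).sum, ?_⟩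
  rintro r ⟨φ, ψ, hφ, hψ, rfl⟩
  rw [list_sum_eq_fin p (fun q => φ q.1 * ψ q.2), list_sum_eq_fin p (fun q => ‖q.1‖ * ‖q.2‖)]
  refine (Finset.abs_sum_le_sum_abs _ _).trans (Finset.sum_le_sum fun i _ => ?_)
  rw [abs_mul]
  have h1 : |φ (p.get i).1| ≤ ‖(p.get i).1‖ := by
    calc |φ (p.get i).1| ≤ ‖φ‖ * ‖(p.get i).1‖ := φ.le_opNorm _
    _ ≤ 1 * ‖(p.get i).1‖ := by gcongr
    _ = ‖(p.get i).1‖ := one_mul _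
  have h2 : |ψ (p.get i).2| ≤ ‖(p.get i).2‖ := by
    calc |ψ (p.get i).2| ≤ ‖ψ‖ * ‖(p.get i).2‖ := ψ.le_opNorm _
    _ ≤ 1 * ‖(p.get i).2‖ := by gcongr
    _ = ‖(p.get i).2‖ := one_mul _
  exact mul_le_mul h1 h2 (abs_nonneg _) (norm_nonneg _)

theorem le_epsNorm (p : List (E × F)) (φ : E →L[ℝ] ℝ) (ψ : F →L[ℝ] ℝ)
    (hφ : ‖φ‖ ≤ 1) (hψ : ‖ψ‖ ≤ 1) :
    |(p.map fun q => φ q.1 * ψ q.2).sum| ≤ epsNorm p :=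
  le_csSup (epsNorm_set_bddAbove p) ⟨φ, ψ, hφ, hψ, rfl⟩

theorem epsNorm_nonneg (p : List (E × F)) : 0 ≤ epsNorm p := by
  have := le_epsNorm p 0 0 (by simp) (by simp)
  exact le_trans (abs_nonneg _) this

/-- Oscillation partition: a compact space can be partitioned into finitely many
Borel pieces, with marked points, on which finitely many given continuous functions
each oscillate by at most `δ`. -/
theorem exists_partition {Ω : Type*} [TopologicalSpace Ω] [CompactSpace Ω] [Nonempty Ω]
    {n : ℕ} (f : Fin n → Ω → ℝ) (hf : ∀ i, Continuous (f i))
    {δ : ℝ} (hδ : 0 < δ) :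
    ∃ (k : ℕ) (B : Fin k → Set Ω) (x : Fin k → Ω),
      (∀ j, Borel' Ω (B j)) ∧ Pairwise (Function.onFun Disjoint B) ∧
      (⋃ j, B j) = Set.univ ∧
      ∀ j i, ∀ φ ∈ B j, |f i φ - f i (x j)| ≤ δ := by
  classical
  letI : MeasurableSpace Ω := borel Ω
  haveI : BorelSpace Ω := ⟨rfl⟩
  set U : Ω → Set Ω := fun z => ⋂ i, {φ | |f i φ - f i z| < δ / 2} with hU
  have hUopen : ∀ z, IsOpen (U z) := by
    intro z
    exact isOpen_iInter_of_finite fun i =>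
      isOpen_lt (by continuity) continuous_const
  have hmemU : ∀ z, z ∈ U z := fun z => Set.mem_iInter.2 fun i => by
    simp [half_pos hδ]
  have hcover : Set.univ ⊆ ⋃ z, U z := fun z _ => Set.mem_iUnion.2 ⟨z, hmemU z⟩
  obtain ⟨t, ht⟩ := isCompact_univ.elim_finite_subcover U hUopen hcover
  set k := t.card with hk
  set z : Fin k → Ω := fun j => (t.equivFin.symm j).1 with hz
  set B : Fin k → Set Ω := fun j => U (z j) \ ⋃ (l : Fin k) (_ : l < j), U (z l) with hB
  have hBsub : ∀ j, B j ⊆ U (z j) := fun j => Set.diff_subset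
  set x : Fin k → Ω := fun j =>
    if h : (B j).Nonempty then h.choose else Classical.arbitrary Ω with hx
  have hBU : (⋃ j, B j) = Set.univ := by
    apply Set.eq_univ_of_forall
    intro φ
    have : ∃ j : Fin k, φ ∈ U (z j) := by
      obtain ⟨w, hw⟩ := Set.mem_iUnion₂.1 (ht (Set.mem_univ φ))
      exact ⟨t.equivFin ⟨w, hw.1⟩, by simpa [hz] using hw.2⟩
    let S : Finset (Fin k) := Finset.univ.filter fun j => φ ∈ U (z j)
    have hS : S.Nonempty := ⟨this.choose, by simp [S, this.choose_spec]⟩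
    refine Set.mem_iUnion.2 ⟨S.min' hS, ?_⟩
    constructor
    · have := S.min'_mem hS
      simpa [S] using this
    · intro hmem
      simp only [Set.mem_iUnion] at hmem
      obtain ⟨l, hl, hlU⟩ := hmem
      have : S.min' hS ≤ l := S.min'_le l (by simp [S, hlU])
      exact absurd hl (not_lt.2 this)
  refine ⟨k, B, x, ?_, ?_, hBU, ?_⟩
  · intro j
    have h1 : MeasurableSet (U (z j)) := (hUopen (z j)).measurableSet
    have h2 : MeasurableSet (⋃ (l : Fin k) (_ : l < j), U (z l)) :=
      MeasurableSet.iUnion fun l => MeasurableSet.iUnion fun _ =>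
        (hUopen (z l)).measurableSet
    exact h1.diff h2
  · intro j1 j2 hne
    rcases hne.lt_or_gt with h | h
    · refine Set.disjoint_left.2 fun φ h1 h2 => ?_
      exact h2.2 (Set.mem_iUnion.2 ⟨j1, Set.mem_iUnion.2 ⟨h, hBsub j1 h1⟩⟩)
    · refine Set.disjoint_left.2 fun φ h1 h2 => ?_
      exact h1.2 (Set.mem_iUnion.2 ⟨j2, Set.mem_iUnion.2 ⟨h, hBsub j2 h2⟩⟩)
  · intro j i φ hφ
    have hne : (B j).Nonempty := ⟨φ, hφ⟩
    have hxj : x j ∈ B j := by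
      rw [hx]; simp only [dif_pos hne]; exact hne.choose_spec
    have h1 : |f i φ - f i (z j)| < δ / 2 := by
      have := (hBsub j hφ); rw [hU] at this
      exact Set.mem_iInter.1 this i
    have h2 : |f i (x j) - f i (z j)| < δ / 2 := by
      have := (hBsub j hxj); rw [hU] at this
      exact Set.mem_iInter.1 this i
    calc |f i φ - f i (x j)| ≤ |f i φ - f i (z j)| + |f i (z j) - f i (x j)| :=
          abs_sub_le _ _ _
      _ = |f i φ - f i (z j)| + |f i (x j) - f i (z j)| := by rw [abs_sub_comm (f i (z j))]
      _ ≤ δ / 2 + δ / 2 := by linarith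
      _ = δ := by ring

theorem CountablyAdditive.empty {Ω Z : Type*} [TopologicalSpace Ω] [NormedAddCommGroup Z]
    {m : Set Ω → Z} (hca : CountablyAdditive m) : m ∅ = 0 := by
  have h := hca.2 (fun _ => (∅ : Set Ω)) (fun _ => @MeasurableSet.empty _ (borel Ω))
    (fun a b hab => by simp [Function.onFun])
  simp only [Set.iUnion_empty] at h
  have h2 : Filter.Tendsto (fun _ : ℕ => m ∅) Filter.atTop (nhds 0) :=
    h.summable.tendsto_atTop_zero
  exact tendsto_nhds_unique tendsto_const_nhds h2

end Aux

set_option maxHeartbeats 1000000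

/-- If `T : E → F` admits a weak representation by a regular countably
additive `F**`-valued Borel vector measure `m` of bounded variation on the closed unit
ball `B(E*)` of the dual (with its weak-star topology), i.e.
`y*(T e) = ∫_{B(E*)} e*(e) d m_{y*}(e*)` for all `e ∈ E`, `y* ∈ F*`, then `T` is a
(Grothendieck) integral operator and `‖T‖_int ≤ |m|(B(E*))`. -/
theorem statement0 {E F : Type*}
    [NormedAddCommGroup E] [NormedSpace ℝ E] [CompleteSpace E]
    [NormedAddCommGroup F] [NormedSpace ℝ F] [CompleteSpace F]
    (T : E →L[ℝ] F)
    (m : Set (DualBall E) → ((F →L[ℝ] ℝ) →L[ℝ] ℝ))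
    (hca : CountablyAdditive m)
    (hreg : RegularVM m)
    (hbv : variation m Set.univ < ⊤)
    (hrep : ∀ (e : E) (y : F →L[ℝ] ℝ),
      IntegralEq (fun V => m V y) (fun φ : DualBall E => φ.1 e) (y (T e))) :
    IsIntegralOp T ∧ ENNReal.ofReal (intNorm T) ≤ variation m Set.univ := by
  classical
  letI : MeasurableSpace (DualBall E) := borel _
  haveI : BorelSpace (DualBall E) := ⟨rfl⟩
  haveI hnem : Nonempty (DualBall E) := ⟨⟨0, by simp⟩⟩
  haveI : CompactSpace (DualBall E) := by
    have h := WeakDual.isCompact_closedBall (𝕜 := ℝ) (E := E) 0 1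
    have he : (WeakDual.toStrongDual ⁻¹' Metric.closedBall 0 1 : Set (WeakDual ℝ E))
        = {φ : WeakDual ℝ E | ‖WeakDual.toStrongDual φ‖ ≤ 1} := by
      ext φ
      simp [Metric.mem_closedBall, dist_zero_right]
    rw [he] at h
    exact isCompact_iff_compactSpace.mp h
  have hm0 : m ∅ = 0 := hca.empty
  set Vr : ℝ := (variation m Set.univ).toReal with hVr
  have hbound : IntegralBound T Vr := by
    refine ⟨ENNReal.toReal_nonneg, fun p => ?_⟩
    set N := p.length with hN
    set e : Fin N → E := fun i => (p.get i).1 with he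
    set y : Fin N → (F →L[ℝ] ℝ) := fun i => (p.get i).2 with hy
    have hei : ∀ i : Fin N, (p.get i).1 = e i := fun _ => rfl
    have hyi : ∀ i : Fin N, (p.get i).2 = y i := fun _ => rfl
    have hsum : (p.map fun q => q.2 (T q.1)).sum = ∑ i, (y i) (T (e i)) :=
      list_sum_eq_fin p _
    rw [hsum]
    choose μp μn hμpf hμnf hmeq hval using fun i : Fin N => hrep (e i) (y i)
    haveI : ∀ i, IsFiniteMeasure (μp i) := hμpf
    haveI : ∀ i, IsFiniteMeasure (μn i) := hμnf
    set f : Fin N → DualBall E → ℝ := fun i φ => φ.1 (e i) with hf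
    have hvali : ∀ i, (y i) (T (e i)) = (∫ φ, f i φ ∂(μp i)) - ∫ φ, f i φ ∂(μn i) :=
      fun i => hval i
    have hfc : ∀ i, Continuous (f i) :=
      fun i => (WeakDual.eval_continuous (e i)).comp continuous_subtype_val
    have hfb : ∀ i φ, |f i φ| ≤ ‖e i‖ := by
      intro i φ
      calc |f i φ| ≤ ‖WeakDual.toStrongDual φ.1‖ * ‖e i‖ :=
            (WeakDual.toStrongDual φ.1).le_opNorm _
        _ ≤ 1 * ‖e i‖ := by
            have := φ.2
            gcongr
        _ = ‖e i‖ := one_mul _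
    have hint : ∀ (i : Fin N) (μ : Measure (DualBall E)) [IsFiniteMeasure μ],
        Integrable (f i) μ := by
      intro i μ _
      refine (integrable_const ‖e i‖).mono' ((hfc i).aestronglyMeasurable) ?_
      exact Filter.Eventually.of_forall fun φ => by
        simpa [Real.norm_eq_abs] using hfb i φ
    set M : ℝ := ∑ i, ((μp i Set.univ).toReal + (μn i Set.univ).toReal) with hM
    have hM0 : 0 ≤ M := Finset.sum_nonneg fun i _ => by positivity
    have hmain : ∀ ε : ℝ, 0 < ε →
        |∑ i, (y i) (T (e i))| ≤ Vr * epsNorm p + ε := by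
      intro ε hε
      set δ : ℝ := ε / (M + 1) with hδdef
      have hδ : 0 < δ := div_pos hε (by linarith)
      obtain ⟨k, B, x, hBm, hBd, hBu, hosc⟩ := exists_partition f hfc hδ
      have hBmeas : ∀ j, MeasurableSet (B j) := hBm
      set w : Fin k → (F →L[ℝ] ℝ) := fun j => ∑ i, f i (x j) • y i with hw
      -- Claim 2 : the main term is bounded by the variation times the eps norm
      have key2 : ∀ j, |(m (B j)) (w j)| ≤ ‖m (B j)‖ * epsNorm p := by
        intro j
        rcases eq_or_ne (m (B j)) 0 with h0 | h0
        · rw [h0]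
          simpa using mul_nonneg (norm_nonneg (0 : (F →L[ℝ] ℝ) →L[ℝ] ℝ)) (epsNorm_nonneg p)
        · set ψ : (F →L[ℝ] ℝ) →L[ℝ] ℝ := ‖m (B j)‖⁻¹ • m (B j) with hψ
          have hmn : ‖m (B j)‖ ≠ 0 :=
            fun h => h0 (ContinuousLinearMap.opNorm_zero_iff _ |>.mp h)
          have hψn : ‖ψ‖ ≤ 1 := by
            refine ContinuousLinearMap.opNorm_le_bound _ zero_le_one fun v => ?_
            have hrfl : ψ v = ‖m (B j)‖⁻¹ * (m (B j)) v := rfl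
            have hpos : (0:ℝ) < ‖m (B j)‖ :=
              lt_of_le_of_ne (norm_nonneg (m (B j))) (Ne.symm hmn)
            rw [one_mul]
            have hnn2 : ‖(‖m (B j)‖)‖ = ‖m (B j)‖ := norm_norm (m (B j))
            calc ‖ψ v‖ = ‖m (B j)‖⁻¹ * ‖(m (B j)) v‖ := by
                  rw [hrfl, norm_mul, norm_inv, hnn2]
              _ ≤ ‖m (B j)‖⁻¹ * (‖m (B j)‖ * ‖v‖) :=
                  mul_le_mul_of_nonneg_left ((m (B j)).le_opNorm v) (by positivity)
              _ = ‖v‖ := by field_simp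
          have hφn : ‖(WeakDual.toStrongDual (x j).1 : E →L[ℝ] ℝ)‖ ≤ 1 := (x j).2
          have hval2 : (m (B j)) (w j) = ‖m (B j)‖ * ψ (w j) := by
            have hrfl : ψ (w j) = ‖m (B j)‖⁻¹ * (m (B j)) (w j) := rfl
            rw [hrfl, ← mul_assoc, mul_inv_cancel₀ hmn, one_mul]
          have hψw : (p.map fun q =>
              (WeakDual.toStrongDual (x j).1 : E →L[ℝ] ℝ) q.1 * ψ q.2).sum = ψ (w j) := by
            rw [list_sum_eq_fin p _, hw, map_sum]
            refine Finset.sum_congr rfl fun i _ => ?_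
            rw [_root_.map_smul, smul_eq_mul, hei, hyi]
            rfl
          have hnn : (0 : ℝ) ≤ ‖m (B j)‖ := norm_nonneg (m (B j))
          calc |(m (B j)) (w j)| = ‖m (B j)‖ * |ψ (w j)| := by
                rw [hval2, abs_mul]
                congr 1
                exact abs_of_nonneg hnn
            _ ≤ ‖m (B j)‖ * epsNorm p := by
                refine mul_le_mul_of_nonneg_left ?_ hnn
                rw [← hψw]
                exact le_epsNorm p _ ψ hφn hψn
      -- the total variation bound
      have hvarsum : ∑ j, ‖m (B j)‖ ≤ Vr := by
        set S : Finset (Fin k) := Finset.univ.filter fun j => (B j).Nonempty with hS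
        have hmemS : ∀ j, j ∈ S ↔ (B j).Nonempty := fun j => by simp [hS]
        have hinj : ∀ a ∈ S, ∀ b ∈ S, B a = B b → a = b := by
          intro a ha b hb hab
          by_contra hne
          have hd : Disjoint (B a) (B b) := hBd hne
          rw [hab] at hd
          have hbe : B b = ∅ := by simpa using disjoint_self.1 hd
          exact ((hmemS b).1 hb).ne_empty hbe
        have hP : IsBorelPartition (S.image B) Set.univ := by
          refine ⟨?_, ?_, ?_⟩
          · intro A hA
            obtain ⟨j, _, rfl⟩ := Finset.mem_image.1 hA
            exact hBm j
          · intro A hA A' hA' hne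
            obtain ⟨a, _, rfl⟩ := Finset.mem_image.1 (Finset.mem_coe.1 hA)
            obtain ⟨b, _, rfl⟩ := Finset.mem_image.1 (Finset.mem_coe.1 hA')
            have hab : a ≠ b := fun h => hne (by rw [h])
            exact hBd hab
          · rw [Finset.coe_image, Set.sUnion_image]
            apply Set.eq_univ_of_univ_subset
            rw [← hBu]
            refine Set.iUnion_subset fun j φ hφ => ?_
            exact Set.mem_iUnion₂.2 ⟨j, (hmemS j).2 ⟨φ, hφ⟩, hφ⟩
        have h1 : (∑ j : Fin k, (‖m (B j)‖₊ : ENNReal)) ≤ variation m Set.univ := by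
          have heq : (∑ j : Fin k, (‖m (B j)‖₊ : ENNReal))
              = ∑ j ∈ S, (‖m (B j)‖₊ : ENNReal) := by
            symm
            apply Finset.sum_subset (Finset.subset_univ S)
            intro j _ hj
            have hBe : B j = ∅ := Set.not_nonempty_iff_eq_empty.1 ((hmemS j).not.1 hj)
            rw [hBe, hm0]
            exact_mod_cast @nnnorm_zero ((F →L[ℝ] ℝ) →L[ℝ] ℝ) _
          have himg : ∑ A ∈ S.image B, (‖m A‖₊ : ENNReal)
              = ∑ j ∈ S, (‖m (B j)‖₊ : ENNReal) := Finset.sum_image hinj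
          rw [heq, ← himg]
          exact le_iSup (fun P : {P : Finset (Set (DualBall E)) // IsBorelPartition P Set.univ}
            => ∑ A ∈ P.1, (‖m A‖₊ : ENNReal)) ⟨S.image B, hP⟩
        have h2 := ENNReal.toReal_mono hbv.ne h1
        rw [ENNReal.toReal_sum (fun j _ => ENNReal.coe_ne_top)] at h2
        simpa using h2
      have claim2 : |∑ j, (m (B j)) (w j)| ≤ Vr * epsNorm p := by
        calc |∑ j, (m (B j)) (w j)| ≤ ∑ j, |(m (B j)) (w j)| :=
              Finset.abs_sum_le_sum_abs _ _
          _ ≤ ∑ j, ‖m (B j)‖ * epsNorm p := Finset.sum_le_sum fun j _ => key2 j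
          _ = (∑ j, ‖m (B j)‖) * epsNorm p := (Finset.sum_mul _ _ _).symm
          _ ≤ Vr * epsNorm p := mul_le_mul_of_nonneg_right hvarsum (epsNorm_nonneg p)
      -- integral approximation by Riemann-type sums over the partition
      have intapprox : ∀ (i : Fin N) (μ : Measure (DualBall E)) [IsFiniteMeasure μ],
          |(∫ φ, f i φ ∂μ) - ∑ j, f i (x j) * (μ (B j)).toReal|
            ≤ δ * (μ Set.univ).toReal := by
        intro i μ _
        have hint' := hint i μ
        have h1 : (∫ φ, f i φ ∂μ) = ∑ j, ∫ φ in B j, f i φ ∂μ := by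
          rw [← setIntegral_univ (μ := μ) (f := fun φ => f i φ), ← hBu,
            integral_iUnion_fintype hBmeas hBd fun j => hint'.integrableOn]
        have h2 : ∀ j, |(∫ φ in B j, f i φ ∂μ) - f i (x j) * (μ (B j)).toReal|
            ≤ δ * (μ (B j)).toReal := by
          intro j
          have hc : (∫ _ in B j, f i (x j) ∂μ) = f i (x j) * (μ (B j)).toReal := by
            rw [setIntegral_const, smul_eq_mul, mul_comm]
            rfl
          have hsub : (∫ φ in B j, (f i φ - f i (x j)) ∂μ)
              = (∫ φ in B j, f i φ ∂μ) - f i (x j) * (μ (B j)).toReal := by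
            rw [integral_sub hint'.integrableOn ((integrable_const _).integrableOn), hc]
          rw [← hsub]
          have hb := norm_setIntegral_le_of_norm_le_const (μ := μ) (s := B j) (C := δ) (f := fun φ => f i φ - f i (x j))
            (measure_lt_top μ _)
            (fun φ hφ => by simpa [Real.norm_eq_abs] using hosc j i φ hφ)
          simpa [Real.norm_eq_abs, Measure.real] using hb
        have h3 : ∑ j, (μ (B j)).toReal = (μ Set.univ).toReal := by
          rw [← hBu, MeasureTheory.measure_iUnion hBd hBmeas, tsum_fintype,
            ENNReal.toReal_sum fun j _ => (measure_lt_top μ _).ne]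
        calc |(∫ φ, f i φ ∂μ) - ∑ j, f i (x j) * (μ (B j)).toReal|
            = |∑ j, ((∫ φ in B j, f i φ ∂μ) - f i (x j) * (μ (B j)).toReal)| := by
              rw [h1, ← Finset.sum_sub_distrib]
          _ ≤ ∑ j, |(∫ φ in B j, f i φ ∂μ) - f i (x j) * (μ (B j)).toReal| :=
              Finset.abs_sum_le_sum_abs _ _
          _ ≤ ∑ j, δ * (μ (B j)).toReal := Finset.sum_le_sum fun j _ => h2 j
          _ = δ * (μ Set.univ).toReal := by rw [← Finset.mul_sum, h3]
      -- Claim 1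
      have hmBj : ∀ j i, (m (B j)) (y i) = (μp i (B j)).toReal - (μn i (B j)).toReal :=
        fun j i => hmeq i (B j) (hBm j)
      have hexp : ∑ j, (m (B j)) (w j)
          = ∑ i, ∑ j, f i (x j) * ((μp i (B j)).toReal - (μn i (B j)).toReal) := by
        rw [Finset.sum_comm]
        refine Finset.sum_congr rfl fun j _ => ?_
        rw [hw, map_sum]
        refine Finset.sum_congr rfl fun i _ => ?_
        rw [_root_.map_smul, smul_eq_mul, hmBj j i]
      have claim1 : |∑ i, (y i) (T (e i)) - ∑ j, (m (B j)) (w j)| ≤ δ * M := by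
        rw [hexp, ← Finset.sum_sub_distrib]
        refine (Finset.abs_sum_le_sum_abs _ _).trans ?_
        rw [hM, Finset.mul_sum]
        refine Finset.sum_le_sum fun i _ => ?_
        have hterm : (y i) (T (e i))
              - ∑ j, f i (x j) * ((μp i (B j)).toReal - (μn i (B j)).toReal)
            = ((∫ φ, f i φ ∂(μp i)) - ∑ j, f i (x j) * (μp i (B j)).toReal)
              - ((∫ φ, f i φ ∂(μn i)) - ∑ j, f i (x j) * (μn i (B j)).toReal) := by
          rw [hvali i]
          have hd : ∑ j, f i (x j) * ((μp i (B j)).toReal - (μn i (B j)).toReal)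
              = ∑ j, (f i (x j) * (μp i (B j)).toReal - f i (x j) * (μn i (B j)).toReal) :=
            Finset.sum_congr rfl fun j _ => by ring
          rw [hd, Finset.sum_sub_distrib]
          ring
        rw [hterm]
        have habs : ∀ a b : ℝ, |a - b| ≤ |a| + |b| := fun a b => by
          simpa [sub_eq_add_neg, abs_neg] using abs_add_le a (-b)
        calc |((∫ φ, f i φ ∂(μp i)) - ∑ j, f i (x j) * (μp i (B j)).toReal)
              - ((∫ φ, f i φ ∂(μn i)) - ∑ j, f i (x j) * (μn i (B j)).toReal)|
            ≤ |(∫ φ, f i φ ∂(μp i)) - ∑ j, f i (x j) * (μp i (B j)).toReal|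
              + |(∫ φ, f i φ ∂(μn i)) - ∑ j, f i (x j) * (μn i (B j)).toReal| :=
              habs _ _
          _ ≤ δ * (μp i Set.univ).toReal + δ * (μn i Set.univ).toReal :=
              add_le_add (intapprox i (μp i)) (intapprox i (μn i))
          _ = δ * ((μp i Set.univ).toReal + (μn i Set.univ).toReal) := by ring
      have hδM : δ * M ≤ ε := by
        have h1 : δ * (M + 1) = ε := by
          rw [hδdef]
          field_simp
        have h2 : δ * (M + 1) = δ * M + δ := by ring
        linarith
      calc |∑ i, (y i) (T (e i))|
          = |∑ j, (m (B j)) (w j) + (∑ i, (y i) (T (e i)) - ∑ j, (m (B j)) (w j))| := by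
            ring_nf
        _ ≤ |∑ j, (m (B j)) (w j)| + |∑ i, (y i) (T (e i)) - ∑ j, (m (B j)) (w j)| :=
            abs_add_le _ _
        _ ≤ Vr * epsNorm p + δ * M := add_le_add claim2 claim1
        _ ≤ Vr * epsNorm p + ε := by linarith
    by_contra hcon
    push_neg at hcon
    have h1 := hmain ((|∑ i, (y i) (T (e i))| - Vr * epsNorm p) / 2) (by linarith)
    linarith
  refine ⟨⟨Vr, hbound⟩, ?_⟩
  have h1 : intNorm T ≤ Vr := csInf_le ⟨0, fun C hC => hC.1⟩ hbound
  calc ENNReal.ofReal (intNorm T) ≤ ENNReal.ofReal Vr := ENNReal.ofReal_le_ofReal h1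
    _ = variation m Set.univ := ENNReal.ofReal_toReal hbv.ne

end Paper
end
end

section
/- Let X be a compact Hausdorff space, E and F Banach spaces, and T : C(X,E) → F a (Grothendieck) integral operator with representing measure G. Let θ be a regular, countably additive F**-valued vector measure of bounded variation on the Borel σ-field of X × B(E*) such that y*(Tf) = ∫_{X × B(E*)} e*(f(x)) d θ_{y*}(x,e*) for all f ∈ C(X,E) and y* ∈ F*, where θ_{y*}(C) = θ(C)(y*). Then for every Borel subset B of X, every e ∈ E and every y* ∈ F*, one has ⟨G(B)e, y*⟩ = ∫_{B × B(E*)} e*(e) d θ_{y*}(x, e*). -/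
open MeasureTheory Set

noncomputable section

namespace Paper

variable {Ω Z : Type*} [TopologicalSpace Ω]

instance compactSpace_dualBall (E : Type*) [NormedAddCommGroup E] [NormedSpace ℝ E] :
    CompactSpace (DualBall E) := by
  have h : IsCompact {φ : WeakDual ℝ E | ‖WeakDual.toStrongDual φ‖ ≤ 1} := by
    have h2 := WeakDual.isCompact_closedBall (𝕜 := ℝ) (E := E) 0 1
    convert h2 using 1
    ext φ
    simp [Metric.mem_closedBall, dist_zero_right]
  exact isCompact_iff_compactSpace.mp h

-- AUX

lemma integrable_of_bdd {Ω : Type*} [MeasurableSpace Ω] (μ : Measure Ω) [IsFiniteMeasure μ]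
    {h : Ω → ℝ} (hm : Measurable h) (c : ℝ) (hc : ∀ x, |h x| ≤ c) :
    Integrable h μ :=
  (integrable_const c).mono' hm.aestronglyMeasurable
    (ae_of_all _ fun x => by simpa [Real.norm_eq_abs] using hc x)

lemma pair_le_variation {Ω Z : Type*} [TopologicalSpace Ω] [NormedAddCommGroup Z]
    (m : Set Ω → Z) (hm0 : m ∅ = 0) {D A₁ A₂ : Set Ω}
    (h1 : Borel' Ω A₁) (h2 : Borel' Ω A₂) (hdisj : Disjoint A₁ A₂) (hu : A₁ ∪ A₂ = D) :
    (‖m A₁‖₊ : ENNReal) + ‖m A₂‖₊ ≤ variation m D := by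
  classical
  by_cases hA : A₁ = A₂
  · subst hA
    have h0 : A₁ = ∅ := by simpa using disjoint_self.mp hdisj
    simp [h0, hm0]
  · have hpart : IsBorelPartition ({A₁, A₂} : Finset (Set Ω)) D := by
      refine ⟨?_, ?_, ?_⟩
      · intro B hB
        rcases Finset.mem_insert.mp hB with rfl | hB
        · exact h1
        · rcases Finset.mem_singleton.mp hB with rfl
          exact h2
      · intro x hx y hy hxy
        simp only [Finset.coe_insert, Finset.coe_singleton, Set.mem_insert_iff,
          Set.mem_singleton_iff] at hx hy
        rcases hx with rfl | rfl <;> rcases hy with rfl | rfl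
        · exact absurd rfl hxy
        · exact hdisj
        · exact hdisj.symm
        · exact absurd rfl hxy
      · simp [Finset.coe_insert, Finset.coe_singleton, Set.sUnion_insert,
          Set.sUnion_singleton, hu]
    have hle := le_iSup (fun P : {P : Finset (Set Ω) // IsBorelPartition P D} =>
      ∑ B ∈ P.1, (‖m B‖₊ : ENNReal)) ⟨{A₁, A₂}, hpart⟩
    simpa [variation, variationWith, Finset.sum_pair hA] using hle

lemma variation_apply_le {Ω G : Type*} [TopologicalSpace Ω] [NormedAddCommGroup G]
    [NormedSpace ℝ G] (θ : Set Ω → (G →L[ℝ] ℝ)) (y : G) (D : Set Ω) :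
    variation (fun A => θ A y) D ≤ (‖y‖₊ : ENNReal) * variation θ D := by
  refine iSup_le fun P => ?_
  calc ∑ B ∈ P.1, (‖θ B y‖₊ : ENNReal)
      ≤ ∑ B ∈ P.1, (‖y‖₊ : ENNReal) * ‖θ B‖₊ := by
        refine Finset.sum_le_sum fun B _ => ?_
        rw [← ENNReal.coe_mul, ENNReal.coe_le_coe, mul_comm]
        exact (θ B).le_opNNNorm y
    _ = ‖y‖₊ * ∑ B ∈ P.1, (‖θ B‖₊ : ENNReal) := by rw [Finset.mul_sum]
    _ ≤ ‖y‖₊ * variation θ D := by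
        exact mul_le_mul_right (le_iSup (fun P : {P : Finset (Set Ω) // IsBorelPartition P D} =>
          ∑ B ∈ P.1, (‖θ B‖₊ : ENNReal)) P) _

lemma integral_sub_eq_of_decomp {Ω : Type*} [TopologicalSpace Ω]
    (ρp ρn ρp' ρn' : @Measure Ω (borel Ω))
    (h1 : IsFiniteMeasure ρp) (h2 : IsFiniteMeasure ρn)
    (h3 : IsFiniteMeasure ρp') (h4 : IsFiniteMeasure ρn')
    (hagree : ∀ A : Set Ω, Borel' Ω A →
      (ρp A).toReal - (ρn A).toReal = (ρp' A).toReal - (ρn' A).toReal)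
    (h : Ω → ℝ) (hmeas : Measurable[borel Ω] h) (c : ℝ) (hc : ∀ x, |h x| ≤ c) :
    (∫ x, h x ∂ρp) - ∫ x, h x ∂ρn = (∫ x, h x ∂ρp') - ∫ x, h x ∂ρn' := by
  letI : MeasurableSpace Ω := borel Ω
  haveI := h1; haveI := h2; haveI := h3; haveI := h4
  have key : ρp + ρn' = ρp' + ρn := by
    ext A hA
    have hr := hagree A hA
    have e1 : ρp A ≠ ⊤ := measure_ne_top _ _
    have e2 : ρn A ≠ ⊤ := measure_ne_top _ _
    have e3 : ρp' A ≠ ⊤ := measure_ne_top _ _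
    have e4 : ρn' A ≠ ⊤ := measure_ne_top _ _
    have hre : (ρp A).toReal + (ρn' A).toReal = (ρp' A).toReal + (ρn A).toReal := by linarith
    rw [← ENNReal.toReal_add e1 e4, ← ENNReal.toReal_add e3 e2] at hre
    simp only [Measure.add_apply]
    exact (ENNReal.toReal_eq_toReal_iff' (by finiteness) (by finiteness)).mp hre
  have Ip := integrable_of_bdd ρp hmeas c hc
  have In := integrable_of_bdd ρn hmeas c hc
  have Ip' := integrable_of_bdd ρp' hmeas c hc
  have In' := integrable_of_bdd ρn' hmeas c hc
  have h5 : (∫ x, h x ∂ρp) + ∫ x, h x ∂ρn' = (∫ x, h x ∂ρp') + ∫ x, h x ∂ρn := by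
    rw [← integral_add_measure Ip In', ← integral_add_measure Ip' In, key]
  linarith

lemma integralEq_value {Ω : Type*} [TopologicalSpace Ω]
    {m : Set Ω → ℝ} {h : Ω → ℝ} {r : ℝ}
    (hI : IntegralEq m h r)
    (ρp ρn : @Measure Ω (borel Ω)) (h1 : IsFiniteMeasure ρp) (h2 : IsFiniteMeasure ρn)
    (hd : ∀ A : Set Ω, Borel' Ω A → m A = (ρp A).toReal - (ρn A).toReal)
    (hmeas : Measurable[borel Ω] h) (c : ℝ) (hc : ∀ x, |h x| ≤ c) :
    r = (∫ x, h x ∂ρp) - ∫ x, h x ∂ρn := by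
  obtain ⟨μp, μn, f1, f2, hd', hr⟩ := hI
  have key : ∀ A : Set Ω, Borel' Ω A →
      (μp A).toReal - (μn A).toReal = (ρp A).toReal - (ρn A).toReal :=
    fun A hA => by rw [← hd' A hA, hd A hA]
  rw [hr, integral_sub_eq_of_decomp μp μn ρp ρn f1 f2 h1 h2 key h hmeas c hc]


lemma abs_integral_sub_le_variation {Ω : Type*} [TopologicalSpace Ω]
    (ρp ρn : @Measure Ω (borel Ω)) (h1 : IsFiniteMeasure ρp) (h2 : IsFiniteMeasure ρn)
    (m : Set Ω → ℝ)
    (hm : ∀ A : Set Ω, Borel' Ω A → m A = (ρp A).toReal - (ρn A).toReal)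
    (h : Ω → ℝ) (hmeas : Measurable[borel Ω] h) (c : ℝ) (hc : ∀ x, |h x| ≤ c)
    (D : Set Ω) (hD : Borel' Ω D) (hh0 : ∀ x ∉ D, h x = 0) :
    ENNReal.ofReal |(∫ x, h x ∂ρp) - ∫ x, h x ∂ρn| ≤ ENNReal.ofReal c * variation m D := by
  letI : MeasurableSpace Ω := borel Ω
  haveI := h1; haveI := h2
  set s : SignedMeasure Ω := ρp.toSignedMeasure - ρn.toSignedMeasure with hs
  set j := s.toJordanDecomposition with hj
  have hsj : j.toSignedMeasure = s := s.toSignedMeasure_toJordanDecomposition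
  set jp := j.posPart with hjp
  set jn := j.negPart with hjn
  haveI : IsFiniteMeasure jp := j.posPart_finite
  haveI : IsFiniteMeasure jn := j.negPart_finite
  -- the signed measure evaluated two ways
  have hsapp : ∀ A : Set Ω, MeasurableSet A →
      (ρp A).toReal - (ρn A).toReal = (jp A).toReal - (jn A).toReal := by
    intro A hA
    have e1 : s A = (ρp A).toReal - (ρn A).toReal := by
      rw [hs, VectorMeasure.sub_apply, Measure.toSignedMeasure_apply_measurable hA,
        Measure.toSignedMeasure_apply_measurable hA]
      rfl
    have e2 : s A = (jp A).toReal - (jn A).toReal := by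
      rw [← hsj, JordanDecomposition.toSignedMeasure, Measure.toSignedMeasure_sub_apply hA]
      rfl
    rw [← e1, e2]
  -- the two decompositions give the same integrals
  have key : jp + ρn = jn + ρp := by
    ext A hA
    have hr := hsapp A hA
    have hre : (jp A).toReal + (ρn A).toReal = (jn A).toReal + (ρp A).toReal := by linarith
    rw [← ENNReal.toReal_add (measure_ne_top _ _) (measure_ne_top _ _),
      ← ENNReal.toReal_add (measure_ne_top _ _) (measure_ne_top _ _)] at hre
    simp only [Measure.add_apply]
    exact (ENNReal.toReal_eq_toReal_iff' (by finiteness) (by finiteness)).mp hre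
  have Ip := integrable_of_bdd ρp hmeas c hc
  have In := integrable_of_bdd ρn hmeas c hc
  have Ijp := integrable_of_bdd jp hmeas c hc
  have Ijn := integrable_of_bdd jn hmeas c hc
  have hint : (∫ x, h x ∂ρp) - ∫ x, h x ∂ρn = (∫ x, h x ∂jp) - ∫ x, h x ∂jn := by
    have h5 : (∫ x, h x ∂jp) + ∫ x, h x ∂ρn = (∫ x, h x ∂jn) + ∫ x, h x ∂ρp := by
      rw [← integral_add_measure Ijp In, ← integral_add_measure Ijn Ip, key]
    linarith
  -- bound each Jordan part integral
  have habs : ∀ μ : Measure Ω, IsFiniteMeasure μ → |∫ x, h x ∂μ| ≤ c * (μ D).toReal := by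
    intro μ hμf
    haveI := hμf
    have hIh := integrable_of_bdd μ hmeas c hc
    calc |∫ x, h x ∂μ| ≤ ∫ x, |h x| ∂μ := by
          simpa [Real.norm_eq_abs] using norm_integral_le_integral_norm (μ := μ) h
      _ ≤ ∫ x, D.indicator (fun _ => c) x ∂μ := by
          refine integral_mono hIh.abs ((integrable_const c).indicator hD) fun x => ?_
          by_cases hx : x ∈ D
          · simpa [Set.indicator_of_mem hx] using hc x
          · simp [Set.indicator_of_notMem hx, hh0 x hx]
      _ = c * (μ D).toReal := by
          rw [integral_indicator_const (c : ℝ) hD]; simp [mul_comm]; exact Or.inl rfl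
  -- identify the Jordan masses with values of m
  obtain ⟨t, ht, htp, htn⟩ := j.mutuallySingular
  have hA1 : Borel' Ω (D ∩ tᶜ) := hD.inter ht.compl
  have hA2 : Borel' Ω (D ∩ t) := hD.inter ht
  have hdiff1 : D ∩ tᶜ = D \ t := (Set.diff_eq D t).symm
  have hdiff2 : D ∩ t = D \ tᶜ := by rw [Set.diff_eq, compl_compl]
  have hjn1 : jn (D ∩ tᶜ) = 0 := measure_mono_null Set.inter_subset_right htn
  have hjp2 : jp (D ∩ t) = 0 := measure_mono_null Set.inter_subset_right htp
  have hjpD : (jp D).toReal = m (D ∩ tᶜ) := by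
    have h1' : jp (D ∩ tᶜ) = jp D := by rw [hdiff1]; exact measure_diff_null htp
    rw [hm _ hA1, hsapp _ hA1, hjn1, h1']; simp
  have hjnD : (jn D).toReal = -(m (D ∩ t)) := by
    have h1' : jn (D ∩ t) = jn D := by rw [hdiff2]; exact measure_diff_null htn
    rw [hm _ hA2, hsapp _ hA2, hjp2, h1']; simp
  -- the sum of the Jordan masses is at most the variation
  have hm0 : m ∅ = 0 := by simpa using hm ∅ MeasurableSet.empty
  have hsum : jp D + jn D ≤ variation m D := by
    have hpl := pair_le_variation m hm0 hA1 hA2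
      (disjoint_compl_left.mono Set.inter_subset_right Set.inter_subset_right)
      (by rw [← Set.inter_union_distrib_left, Set.compl_union_self, Set.inter_univ])
    refine le_trans (add_le_add ?_ ?_) hpl
    · rw [← ENNReal.ofReal_toReal (measure_ne_top jp D), hjpD,
        ← enorm_eq_nnnorm, Real.enorm_eq_ofReal_abs]
      exact ENNReal.ofReal_le_ofReal (le_abs_self _)
    · rw [← ENNReal.ofReal_toReal (measure_ne_top jn D), hjnD,
        ← enorm_eq_nnnorm, Real.enorm_eq_ofReal_abs]
      exact ENNReal.ofReal_le_ofReal (neg_le_abs _)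
  -- put everything together
  calc ENNReal.ofReal |(∫ x, h x ∂ρp) - ∫ x, h x ∂ρn|
      = ENNReal.ofReal |(∫ x, h x ∂jp) - ∫ x, h x ∂jn| := by rw [hint]
    _ ≤ ENNReal.ofReal (c * ((jp D).toReal + (jn D).toReal)) := by
        refine ENNReal.ofReal_le_ofReal ?_
        have b1 := habs jp inferInstance
        have b2 := habs jn inferInstance
        calc |(∫ x, h x ∂jp) - ∫ x, h x ∂jn| ≤ |∫ x, h x ∂jp| + |∫ x, h x ∂jn| :=
              abs_sub _ _
          _ ≤ c * (jp D).toReal + c * (jn D).toReal := add_le_add b1 b2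
          _ = c * ((jp D).toReal + (jn D).toReal) := by ring
    _ = ENNReal.ofReal c * ENNReal.ofReal ((jp D).toReal + (jn D).toReal) :=
        ENNReal.ofReal_mul' (by positivity)
    _ = ENNReal.ofReal c * (jp D + jn D) := by
        rw [ENNReal.ofReal_add ENNReal.toReal_nonneg ENNReal.toReal_nonneg,
          ENNReal.ofReal_toReal (measure_ne_top _ _), ENNReal.ofReal_toReal (measure_ne_top _ _)]
    _ ≤ ENNReal.ofReal c * variation m D := mul_le_mul_right hsum _

/-- Let `T : C(X,E) → F` be an integral operator with representing
measure `G`, and let `θ` be a regular countably additive `F**`-valued Borel vector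
measure of bounded variation on `X × B(E*)` representing `T`, i.e.
`y*(T f) = ∫_{X × B(E*)} e*(f(x)) d θ_{y*}(x, e*)` for all `f`, `y*`.  Then for every
Borel `B ⊆ X`, every `e ∈ E` and every `y* ∈ F*`,
`⟨G(B) e, y*⟩ = ∫_{B × B(E*)} e*(e) d θ_{y*}(x, e*)`. -/
theorem statement6 {X : Type*} [TopologicalSpace X] [CompactSpace X] [T2Space X]
    {E F : Type*}
    [NormedAddCommGroup E] [NormedSpace ℝ E] [CompleteSpace E]
    [NormedAddCommGroup F] [NormedSpace ℝ F] [CompleteSpace F]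
    (T : C(X, E) →L[ℝ] F)
    (hT : IsIntegralOp T)
    (G : Set X → (E →L[ℝ] ((F →L[ℝ] ℝ) →L[ℝ] ℝ)))
    (hG : Represents T G)
    (θ : Set (X × DualBall E) → ((F →L[ℝ] ℝ) →L[ℝ] ℝ))
    (hca : CountablyAdditive θ)
    (hreg : RegularVM θ)
    (hbv : variation θ Set.univ < ⊤)
    (hrep : ∀ (f : C(X, E)) (y : F →L[ℝ] ℝ),
      IntegralEq (fun C => θ C y) (fun p : X × DualBall E => p.2.1 (f p.1)) (y (T f))) :
    ∀ B : Set X, Borel' X B → ∀ (e : E) (y : F →L[ℝ] ℝ),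
      IntegralEq (fun C => θ C y)
        (Set.indicator (B ×ˢ (Set.univ : Set (DualBall E)))
          (fun p : X × DualBall E => p.2.1 e))
        (G B e y) := by
  intro B hB e y
  letI mX : MeasurableSpace X := borel X
  haveI : BorelSpace X := ⟨rfl⟩
  letI mP : MeasurableSpace (X × DualBall E) := borel (X × DualBall E)
  haveI : BorelSpace (X × DualBall E) := ⟨rfl⟩
  have hB' : MeasurableSet B := hB
  -- the evaluation function
  set g : X × DualBall E → ℝ := fun p => p.2.1 e with hg
  have hgcont : Continuous g :=
    (WeakDual.eval_continuous e).comp (continuous_subtype_val.comp continuous_snd)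
  have hgmeas : Measurable g := hgcont.measurable
  have hgbd : ∀ p, |g p| ≤ ‖e‖ := by
    intro p
    have h1 : ‖(WeakDual.toStrongDual p.2.1) e‖ ≤ ‖WeakDual.toStrongDual p.2.1‖ * ‖e‖ :=
      (WeakDual.toStrongDual p.2.1).le_opNorm e
    calc |g p| = ‖(WeakDual.toStrongDual p.2.1) e‖ := rfl
      _ ≤ ‖WeakDual.toStrongDual p.2.1‖ * ‖e‖ := h1
      _ ≤ 1 * ‖e‖ := mul_le_mul_of_nonneg_right p.2.2 (norm_nonneg e)
      _ = ‖e‖ := one_mul _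
  -- fixed decompositions of θ_y and of G·ey
  obtain ⟨μp, μn, hfp, hfn, hθd, -⟩ := hrep 0 y
  haveI := hfp; haveI := hfn
  obtain ⟨hGe1, hGe2, hGe3, hGe4⟩ := hG.2 e y
  obtain ⟨σp, σn, hsp, hsn, hμd, -⟩ := hGe4 1
  haveI := hsp; haveI := hsn
  have hfstm : Measurable (Prod.fst : X × DualBall E → X) := continuous_fst.measurable
  have hBprod : MeasurableSet (B ×ˢ (Set.univ : Set (DualBall E))) := by
    rw [Set.prod_univ]; exact hfstm hB'
  set φf : X × DualBall E → ℝ :=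
    Set.indicator (B ×ˢ (Set.univ : Set (DualBall E))) g with hφf
  have hφmeas : Measurable φf := hgmeas.indicator hBprod
  have hφbd : ∀ p, |φf p| ≤ ‖e‖ := by
    intro p
    by_cases hp : p ∈ B ×ˢ (Set.univ : Set (DualBall E))
    · rw [hφf, Set.indicator_of_mem hp]; exact hgbd p
    · rw [hφf, Set.indicator_of_notMem hp]; simp [norm_nonneg]
  refine ⟨μp, μn, hfp, hfn, hθd, ?_⟩
  show G B e y = (∫ p, φf p ∂μp) - ∫ p, φf p ∂μn
  set ν : ℝ := (∫ p, φf p ∂μp) - ∫ p, φf p ∂μn with hν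
  -- main estimate
  have habs : ∀ ε : ℝ, 0 < ε → |G B e y - ν| ≤ (1 + 2 * ‖e‖ * ‖y‖) * ε := by
    intro ε hε
    obtain ⟨K₁, U₁, hK₁c, hK₁B, hU₁o, hBU₁, hvar₁⟩ :=
      hGe2 B hB (ENNReal.ofReal ε) (ENNReal.ofReal_pos.mpr hε)
    obtain ⟨K₂, U₂, hK₂c, hK₂B, hU₂o, hBU₂, hvar₂⟩ :=
      hreg _ hBprod (ENNReal.ofReal ε) (ENNReal.ofReal_pos.mpr hε)
    -- the open tube set
    set U' : Set X := {x | ∀ b : DualBall E, (x, b) ∈ U₂} with hU'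
    have hU'o : IsOpen U' := by
      rw [isOpen_iff_forall_mem_open]
      intro x hx
      obtain ⟨v, w, hvo, hwo, hxv, hww, hvw⟩ := generalized_tube_lemma isCompact_singleton
        isCompact_univ hU₂o (fun p hp => by
          have h1 : p.1 = x := hp.1
          have h2 := hx p.2
          rw [← h1] at h2
          simpa using h2)
      refine ⟨v, fun x' hx' b => hvw (Set.mk_mem_prod hx' (hww (Set.mem_univ b))), hvo,
        hxv rfl⟩
    have hBU' : B ⊆ U' := fun x hx b => hBU₂ (Set.mk_mem_prod hx (Set.mem_univ b))
    set K : Set X := K₁ ∪ Prod.fst '' K₂ with hK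
    have hKc : IsCompact K := hK₁c.union (hK₂c.image continuous_fst)
    have hKB : K ⊆ B := by
      rintro x (hx | ⟨p, hp, rfl⟩)
      · exact hK₁B hx
      · exact (hK₂B hp).1
    set U : Set X := U₁ ∩ U' with hUdef
    have hUo : IsOpen U := hU₁o.inter hU'o
    have hBU : B ⊆ U := Set.subset_inter hBU₁ hBU'
    have hKU : K ⊆ U := hKB.trans hBU
    -- Urysohn function
    obtain ⟨u, hu0, hu1, hu01⟩ := exists_continuous_zero_one_of_isClosed
      hUo.isClosed_compl hKc.isClosed
      (Set.disjoint_left.mpr fun x hxU hxK => hxU (hKU hxK))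
    have hubd : ∀ x, |(u : X → ℝ) x| ≤ 1 := fun x => by
      have h01 := hu01 x
      rw [Set.mem_Icc] at h01
      rw [abs_le]; constructor <;> linarith [h01.1, h01.2]
    -- value of T on the tensor
    have hi : y (T (tens u e)) = (∫ x, (u : X → ℝ) x ∂σp) - ∫ x, (u : X → ℝ) x ∂σn :=
      integralEq_value (hGe4 u) σp σn hsp hsn hμd u.continuous.measurable 1 hubd
    set w : X × DualBall E → ℝ := fun p => (u : X → ℝ) p.1 * g p with hw
    have hwmeas : Measurable w := ((u.continuous.comp continuous_fst).mul hgcont).measurable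
    have hwbd : ∀ p, |w p| ≤ ‖e‖ := by
      intro p
      calc |w p| = |(u : X → ℝ) p.1| * |g p| := abs_mul _ _
        _ ≤ 1 * ‖e‖ := mul_le_mul (hubd _) (hgbd _) (abs_nonneg _) zero_le_one
        _ = ‖e‖ := one_mul _
    have hrepu := hrep (tens u e) y
    have hfun : (fun p : X × DualBall E => p.2.1 ((tens u e) p.1)) = w := by
      funext p
      show p.2.1 ((u : X → ℝ) p.1 • e) = (u : X → ℝ) p.1 * p.2.1 e
      rw [_root_.map_smul]; rfl
    rw [hfun] at hrepu
    have hii : y (T (tens u e)) = (∫ p, w p ∂μp) - ∫ p, w p ∂μn :=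
      integralEq_value hrepu μp μn hfp hfn hθd hwmeas ‖e‖ hwbd
    -- first estimate: |G B e y - y (T (tens u e))| ≤ ε
    set h₁ : X → ℝ := fun x => Set.indicator B (fun _ => (1 : ℝ)) x - (u : X → ℝ) x with hh₁
    have hh₁meas : Measurable h₁ :=
      (measurable_const.indicator hB').sub u.continuous.measurable
    have hh₁bd : ∀ x, |h₁ x| ≤ 1 := by
      intro x
      have h01 := hu01 x; rw [Set.mem_Icc] at h01
      by_cases hx : x ∈ B
      · rw [hh₁]; simp only [Set.indicator_of_mem hx]
        rw [abs_le]; constructor <;> linarith [h01.1, h01.2]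
      · rw [hh₁]; simp only [Set.indicator_of_notMem hx]
        rw [abs_le]; constructor <;> linarith [h01.1, h01.2]
    have hh₁0 : ∀ x ∉ U₁ \ K₁, h₁ x = 0 := by
      intro x hx
      rcases Classical.em (x ∈ K₁) with hxK | hxK
      · have hxB : x ∈ B := hK₁B hxK
        have hxu : (u : X → ℝ) x = 1 := hu1 (Set.mem_union_left _ hxK)
        rw [hh₁]; simp [Set.indicator_of_mem hxB, hxu]
      · have hxU : x ∉ U₁ := fun hxU => hx ⟨hxU, hxK⟩
        have hxB : x ∉ B := fun hxB => hxU (hBU₁ hxB)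
        have hxu : (u : X → ℝ) x = 0 := hu0 (fun hxUU => hxU hxUU.1)
        rw [hh₁]; simp [Set.indicator_of_notMem hxB, hxu]
    have hD₁ : MeasurableSet (U₁ \ K₁) :=
      hU₁o.measurableSet.diff hK₁c.isClosed.measurableSet
    have hest₁ := abs_integral_sub_le_variation σp σn hsp hsn (fun A => G A e y) hμd h₁
      hh₁meas 1 hh₁bd (U₁ \ K₁) hD₁ hh₁0
    have hintu_p : Integrable (fun x => (u : X → ℝ) x) σp :=
      integrable_of_bdd σp u.continuous.measurable 1 hubd
    have hintu_n : Integrable (fun x => (u : X → ℝ) x) σn :=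
      integrable_of_bdd σn u.continuous.measurable 1 hubd
    have hint₁p : ∫ x, h₁ x ∂σp = (σp B).toReal - ∫ x, (u : X → ℝ) x ∂σp := by
      rw [hh₁, integral_sub ((integrable_const (1 : ℝ)).indicator hB') hintu_p,
        integral_indicator_const (1 : ℝ) hB']
      simp
      rfl
    have hint₁n : ∫ x, h₁ x ∂σn = (σn B).toReal - ∫ x, (u : X → ℝ) x ∂σn := by
      rw [hh₁, integral_sub ((integrable_const (1 : ℝ)).indicator hB') hintu_n,
        integral_indicator_const (1 : ℝ) hB']
      simp
      rfl
    have heq₁ : (∫ x, h₁ x ∂σp) - ∫ x, h₁ x ∂σn = G B e y - y (T (tens u e)) := by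
      have hGB : G B e y = (σp B).toReal - (σn B).toReal := hμd B hB
      rw [hint₁p, hint₁n, hi, hGB]; ring
    have habs₁ : |G B e y - y (T (tens u e))| ≤ ε := by
      rw [heq₁] at hest₁
      have hlt : ENNReal.ofReal |G B e y - y (T (tens u e))| < ENNReal.ofReal ε := by
        calc ENNReal.ofReal |G B e y - y (T (tens u e))|
            ≤ ENNReal.ofReal 1 * variation (fun A => G A e y) (U₁ \ K₁) := hest₁
          _ = variation (fun A => G A e y) (U₁ \ K₁) := by
              rw [ENNReal.ofReal_one, one_mul]
          _ < ENNReal.ofReal ε := hvar₁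
      exact le_of_lt ((ENNReal.ofReal_lt_ofReal_iff hε).mp hlt)
    -- second estimate: |ν - y (T (tens u e))| ≤ 2‖e‖‖y‖ε
    set h₂ : X × DualBall E → ℝ := fun p => φf p - w p with hh₂
    have hh₂meas : Measurable h₂ := hφmeas.sub hwmeas
    have hh₂bd : ∀ p, |h₂ p| ≤ 2 * ‖e‖ := by
      intro p
      calc |h₂ p| ≤ |φf p| + |w p| := abs_sub _ _
        _ ≤ ‖e‖ + ‖e‖ := add_le_add (hφbd p) (hwbd p)
        _ = 2 * ‖e‖ := by ring
    have hh₂0 : ∀ p ∉ U₂ \ K₂, h₂ p = 0 := by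
      intro p hp
      rcases Classical.em (p ∈ K₂) with hpK | hpK
      · have hpB : p ∈ B ×ˢ (Set.univ : Set (DualBall E)) := hK₂B hpK
        have hpu : (u : X → ℝ) p.1 = 1 :=
          hu1 (Set.mem_union_right _ ⟨p, hpK, rfl⟩)
        rw [hh₂]; simp only [hφf, Set.indicator_of_mem hpB, hw, hpu, one_mul, sub_self]
      · have hpU : p ∉ U₂ := fun hpU => hp ⟨hpU, hpK⟩
        have hpB : p ∉ B ×ˢ (Set.univ : Set (DualBall E)) := fun hpB => hpU (hBU₂ hpB)
        have hpu : (u : X → ℝ) p.1 = 0 := by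
          refine hu0 fun hxUU => hpU ?_
          have := hxUU.2 p.2
          simpa using this
        rw [hh₂]; simp [hφf, Set.indicator_of_notMem hpB, hw, hpu]
    have hD₂ : MeasurableSet (U₂ \ K₂) :=
      hU₂o.measurableSet.diff hK₂c.isClosed.measurableSet
    have hest₂ := abs_integral_sub_le_variation μp μn hfp hfn (fun A => θ A y) hθd h₂
      hh₂meas (2 * ‖e‖) hh₂bd (U₂ \ K₂) hD₂ hh₂0
    have hintφp : Integrable φf μp := integrable_of_bdd μp hφmeas ‖e‖ hφbd
    have hintφn : Integrable φf μn := integrable_of_bdd μn hφmeas ‖e‖ hφbd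
    have hintwp : Integrable w μp := integrable_of_bdd μp hwmeas ‖e‖ hwbd
    have hintwn : Integrable w μn := integrable_of_bdd μn hwmeas ‖e‖ hwbd
    have heq₂ : (∫ p, h₂ p ∂μp) - ∫ p, h₂ p ∂μn = ν - y (T (tens u e)) := by
      rw [hh₂, integral_sub hintφp hintwp, integral_sub hintφn hintwn, hν, hii]; ring
    have habs₂ : |ν - y (T (tens u e))| ≤ 2 * ‖e‖ * (‖y‖ * ε) := by
      rw [heq₂] at hest₂
      have hle : ENNReal.ofReal |ν - y (T (tens u e))| ≤
          ENNReal.ofReal (2 * ‖e‖ * (‖y‖ * ε)) := by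
        calc ENNReal.ofReal |ν - y (T (tens u e))|
            ≤ ENNReal.ofReal (2 * ‖e‖) * variation (fun A => θ A y) (U₂ \ K₂) := hest₂
          _ ≤ ENNReal.ofReal (2 * ‖e‖) * ((‖y‖₊ : ENNReal) * variation θ (U₂ \ K₂)) :=
              mul_le_mul_right (variation_apply_le θ y (U₂ \ K₂)) _
          _ ≤ ENNReal.ofReal (2 * ‖e‖) * ((‖y‖₊ : ENNReal) * ENNReal.ofReal ε) :=
              mul_le_mul_right (mul_le_mul_right (le_of_lt hvar₂) _) _
          _ = ENNReal.ofReal (2 * ‖e‖) * (ENNReal.ofReal ‖y‖ * ENNReal.ofReal ε) := by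
              rw [ofReal_norm_eq_enorm, enorm_eq_nnnorm]
          _ = ENNReal.ofReal (2 * ‖e‖ * (‖y‖ * ε)) := by
              rw [← ENNReal.ofReal_mul (norm_nonneg y), ← ENNReal.ofReal_mul (by positivity)]
      exact (ENNReal.ofReal_le_ofReal_iff (by positivity)).mp hle
    calc |G B e y - ν| ≤ |G B e y - y (T (tens u e))| + |y (T (tens u e)) - ν| :=
          abs_sub_le _ _ _
      _ = |G B e y - y (T (tens u e))| + |ν - y (T (tens u e))| := by rw [abs_sub_comm ν]
      _ ≤ ε + 2 * ‖e‖ * (‖y‖ * ε) := add_le_add habs₁ habs₂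
      _ = (1 + 2 * ‖e‖ * ‖y‖) * ε := by ring
  -- conclude
  have hC : (0 : ℝ) < 1 + 2 * ‖e‖ * ‖y‖ := by positivity
  have hd0 : |G B e y - ν| ≤ 0 := by
    by_contra hlt
    push_neg at hlt
    have h1 := habs (|G B e y - ν| / (2 * (1 + 2 * ‖e‖ * ‖y‖))) (by positivity)
    have h2 : (1 + 2 * ‖e‖ * ‖y‖) * (|G B e y - ν| / (2 * (1 + 2 * ‖e‖ * ‖y‖))) =
        |G B e y - ν| / 2 := by field_simp
    rw [h2] at h1
    linarith
  have : G B e y - ν = 0 := abs_nonpos_iff.mp hd0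
  linarith


end Paper
end
end
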